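/- A connected 4-uniform hypergraph H of order 8 has at least 15 pairs of vertices at distance 1 (adjacent pairs), and equality implies H has exactly 3 hyperedges. -/

import Mathlib

/-- The underlying graph of a hypergraph with edge set `E`: two distinct vertices
are adjacent iff they lie in a common hyperedge. -/
def hyperAdj {V : Type*} [DecidableEq V] (E : Finset (Finset V)) : SimpleGraph V where
  Adj u v := u ≠ v ∧ ∃ e ∈ E, u ∈ e ∧ v ∈ e
  symm := by
    constructor
    rintro u v ⟨h, e, he, hu, hv⟩
    exact ⟨h.symm, e, he, hv, hu⟩
  loopless := by
    constructor
    rintro u ⟨h, -⟩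
    exact h rfl

/-- Distance in the hypergraph, as a function on unordered pairs. -/
noncomputable def pairDist {V : Type*} [DecidableEq V] (E : Finset (Finset V)) : Sym2 V → ℕ :=
  Sym2.lift ⟨fun u v => (hyperAdj E).dist u v, fun u v => (hyperAdj E).dist_comm⟩

/-- The number of unordered pairs of distinct vertices at distance `i`. -/
noncomputable def nPairs {V : Type*} [DecidableEq V] [Fintype V] (E : Finset (Finset V)) (i : ℕ) : ℕ :=
  (Finset.univ.filter fun p : Sym2 V => ¬p.IsDiag ∧ pairDist E p = i).card

/-- The Wiener index: the sum of distances over unordered pairs of distinct vertices. -/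
noncomputable def wiener {V : Type*} [DecidableEq V] [Fintype V] (E : Finset (Finset V)) : ℕ :=
  ∑ p ∈ Finset.univ.filter fun p : Sym2 V => ¬p.IsDiag, pairDist E p

/-!
On `2k` vertices, pick hyperedges `e₁ ≠ e₂` that meet (they exist by connectivity), let
`m = |e₁ ∩ e₂|`, so `0 < m < k`, and let `T` be the `m` vertices outside `W = e₁ ∪ e₂`. Writing `e(X)` for the number
of edges inside `X`, the underlying graph has `e(W) + ∑_{t ∈ T} deg t - e(T)` edges. Here
`e(W) ≥ 2·C(k,2) - C(m,2)` because of the two `k`-cliques, `deg t ≥ k - 1` and `e(T) ≤ C(m,2)`,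
so there are at least `k(k-1) + m(k-m) ≥ k² - 1` edges.

If there are exactly `k² - 1`, all three estimates are sharp: the edges inside `W` are those of
the two cliques, so `e₁` and `e₂` are the only hyperedges inside `W`; and `T` is a clique of
vertices of degree `k - 1`, each of which lies in a single hyperedge, so all hyperedges meeting
`T` coincide. For order `8`, `k = 4`.
-/

open Finset

namespace SimpleGraph

variable {V : Type*} (G : SimpleGraph V) [DecidableRel G.Adj]

theorem card_interedges_comm (s t : Finset V) :
    #(G.interedges s t) = #(G.interedges t s) :=
  have := G.symm
  Rel.card_interedges_comm s t

theorem interedges_self_subset_offDiag (s : Finset V) : G.interedges s s ⊆ s.offDiag :=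
  fun x hx => by
    obtain ⟨h₁, h₂, hadj⟩ := G.mem_interedges_iff.mp hx
    exact mem_offDiag.mpr ⟨h₁, h₂, hadj.ne⟩

theorem isClique_of_offDiag_subset_interedges {s : Finset V}
    (h : s.offDiag ⊆ G.interedges s s) : G.IsClique (s : Set V) :=
  fun x hx y hy hxy =>
    have hpair : (x, y) ∈ s.offDiag := mem_offDiag.mpr ⟨hx, hy, hxy⟩
    (G.mk_mem_interedges_iff.mp (h hpair)).2.2

variable [Fintype V]

theorem sum_degree_eq_card_interedges_univ (s : Finset V) :
    ∑ v ∈ s, G.degree v = #(G.interedges s univ) := by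
  rw [interedges_def, card_filter, sum_product]
  refine sum_congr rfl fun v _ => ?_
  rw [← card_filter, ← card_neighborFinset_eq_degree]
  congr 1
  ext w
  simp

theorem card_interedges_univ [DecidableEq V] (s t : Finset V) :
    #(G.interedges s univ) = #(G.interedges s t) + #(G.interedges s tᶜ) := by
  rw [← card_union_of_disjoint (G.interedges_disjoint_right s disjoint_compl_right)]
  congr 1
  ext x
  simp only [mem_interedges_iff, mem_univ, mem_union, mem_compl]
  tauto

/-- Double counting: the degrees in `t` count the edges meeting `t`, those inside `t` twice. -/
theorem two_mul_card_edgeFinset_add_card_interedges [DecidableEq V] (t : Finset V) :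
    2 * #G.edgeFinset + #(G.interedges t t) = #(G.interedges tᶜ tᶜ) + 2 * ∑ v ∈ t, G.degree v := by
  have hsum := sum_add_sum_compl t fun v => G.degree v
  rw [sum_degrees_eq_twice_card_edges, sum_degree_eq_card_interedges_univ,
    sum_degree_eq_card_interedges_univ, G.card_interedges_univ t t,
    G.card_interedges_univ tᶜ t, G.card_interedges_comm tᶜ t] at hsum
  rw [sum_degree_eq_card_interedges_univ, G.card_interedges_univ t t]
  omega

end SimpleGraph

theorem Finset.subset_or_subset_of_offDiag_subset_union {α : Type*} [DecidableEq α]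
    {s t u : Finset α} (hu : u ⊆ s ∪ t) (h : u.offDiag ⊆ s.offDiag ∪ t.offDiag) :
    u ⊆ s ∨ u ⊆ t := by
  by_contra! hst
  obtain ⟨x, hxu, hxs⟩ := not_subset.mp hst.1
  obtain ⟨y, hyu, hyt⟩ := not_subset.mp hst.2
  have hys : y ∈ s := (mem_union.mp (hu hyu)).resolve_right hyt
  have hxy : (x, y) ∈ u.offDiag := mem_offDiag.mpr ⟨hxu, hyu, fun hxy : x = y => hxs (hxy ▸ hys)⟩
  rcases mem_union.mp (h hxy) with hx | hy
  · exact hxs (mem_offDiag.mp hx).1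
  · exact hyt (mem_offDiag.mp hy).2.1

theorem Finset.card_compl_union_add_card_add_card {α : Type*} [Fintype α] [DecidableEq α]
    (s t : Finset α) : #(s ∪ t)ᶜ + #s + #t = Fintype.card α + #(s ∩ t) := by
  have := card_union_add_card_inter s t
  have := card_le_univ (s ∪ t)
  rw [card_compl]
  omega

theorem Nat.mul_self_add_le_mul_add_one {m k : ℕ} (hm : 0 < m) (hmk : m < k) :
    m * m + k ≤ m * k + 1 := by
  have h1 : 1 ≤ m := hm
  have h2 : m + 1 ≤ k := hmk
  zify at h1 h2 ⊢
  nlinarith [mul_nonneg (sub_nonneg.mpr h1) (sub_nonneg.mpr h2)]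

namespace hyperAdj

open SimpleGraph

variable {V : Type*} [DecidableEq V] {E : Finset (Finset V)} {k : ℕ} {e e₁ e₂ f : Finset V}
  {u v : V}

instance : DecidableRel (hyperAdj E).Adj :=
  fun u v => inferInstanceAs (Decidable (u ≠ v ∧ ∃ e ∈ E, u ∈ e ∧ v ∈ e))

theorem adj_of_mem (he : e ∈ E) (hu : u ∈ e) (hv : v ∈ e) (huv : u ≠ v) :
    (hyperAdj E).Adj u v :=
  ⟨huv, e, he, hu, hv⟩

theorem offDiag_subset_interedges {s : Finset V} (he : e ∈ E) (hs : e ⊆ s) :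
    e.offDiag ⊆ (hyperAdj E).interedges s s := fun x hx => by
  obtain ⟨h₁, h₂, hne⟩ := mem_offDiag.mp hx
  exact (hyperAdj E).mem_interedges_iff.mpr ⟨hs h₁, hs h₂, adj_of_mem he h₁ h₂ hne⟩

theorem exists_crossing_of_connected (hconn : (hyperAdj E).Connected) {s : Finset V}
    (hu : u ∈ s) (hv : v ∉ s) : ∃ e ∈ E, (e ∩ s).Nonempty ∧ ¬e ⊆ s := by
  obtain ⟨p⟩ := hconn.preconnected u v
  obtain ⟨d, -, hd₁, hd₂⟩ := p.exists_boundary_dart s hu hv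
  obtain ⟨-, e, he, h₁, h₂⟩ := d.adj
  exact ⟨e, he, ⟨d.fst, mem_inter.mpr ⟨h₁, hd₁⟩⟩, fun h => hd₂ (h h₂)⟩

theorem exists_mem_of_connected [Nontrivial V] (hconn : (hyperAdj E).Connected) (v : V) :
    ∃ e ∈ E, v ∈ e := by
  obtain ⟨w, hw⟩ := exists_ne v
  obtain ⟨e, he, ⟨x, hx⟩, -⟩ :=
    exists_crossing_of_connected hconn (mem_singleton_self v) (notMem_singleton.mpr hw)
  obtain ⟨hxe, hxv⟩ := mem_inter.mp hx
  exact ⟨e, he, mem_singleton.mp hxv ▸ hxe⟩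

theorem eq_or_eq_of_subset_union (hunif : ∀ e ∈ E, #e = k) (he₁ : e₁ ∈ E) (he₂ : e₂ ∈ E)
    (hf : f ∈ E) (hfW : f ⊆ e₁ ∪ e₂)
    (hW : (hyperAdj E).interedges (e₁ ∪ e₂) (e₁ ∪ e₂) ⊆ e₁.offDiag ∪ e₂.offDiag) :
    f = e₁ ∨ f = e₂ := by
  have hcard (e) (he : e ∈ E) (hfe : f ⊆ e) : f = e :=
    eq_of_subset_of_card_le hfe (by rw [hunif e he, hunif f hf])
  exact (subset_or_subset_of_offDiag_subset_union hfW
    ((offDiag_subset_interedges hf hfW).trans hW)).imp (hcard e₁ he₁) (hcard e₂ he₂)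

variable [Fintype V]

theorem erase_subset_neighborFinset (he : e ∈ E) (hv : v ∈ e) :
    e.erase v ⊆ (hyperAdj E).neighborFinset v := fun u hu => by
  rw [mem_neighborFinset]
  exact adj_of_mem he hv (mem_of_mem_erase hu) (ne_of_mem_erase hu).symm

theorem card_le_degree_add_one (he : e ∈ E) (hv : v ∈ e) :
    #e ≤ (hyperAdj E).degree v + 1 := by
  have := card_le_card (erase_subset_neighborFinset he hv)
  rw [card_erase_of_mem hv, card_neighborFinset_eq_degree] at this
  omega

theorem neighborFinset_eq_erase (he : e ∈ E) (hv : v ∈ e)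
    (hdeg : (hyperAdj E).degree v + 1 = #e) : (hyperAdj E).neighborFinset v = e.erase v :=
  (eq_of_subset_of_card_le (erase_subset_neighborFinset he hv)
    (by rw [card_erase_of_mem hv, card_neighborFinset_eq_degree]; omega)).symm

theorem eq_of_degree_add_one_eq (he : e ∈ E) (hf : f ∈ E) (hve : v ∈ e) (hvf : v ∈ f)
    (hde : (hyperAdj E).degree v + 1 = #e) (hdf : (hyperAdj E).degree v + 1 = #f) : e = f := by
  rw [← insert_erase hve, ← insert_erase hvf, ← neighborFinset_eq_erase he hve hde,
    ← neighborFinset_eq_erase hf hvf hdf]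

theorem exists_pair_inter_card_pos_lt [Nontrivial V] (hconn : (hyperAdj E).Connected)
    (hunif : ∀ e ∈ E, #e = k) (hk : k < Fintype.card V) :
    ∃ e₁ ∈ E, ∃ e₂ ∈ E, 0 < #(e₁ ∩ e₂) ∧ #(e₁ ∩ e₂) < k := by
  obtain ⟨v⟩ : Nonempty V := hconn.nonempty
  obtain ⟨e₁, he₁, hv⟩ := exists_mem_of_connected hconn v
  obtain ⟨w, hw⟩ : ∃ w, w ∉ e₁ := by
    by_contra! h
    have := card_le_card fun x (_ : x ∈ univ) => h x
    rw [card_univ, hunif e₁ he₁] at this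
    omega
  obtain ⟨e₂, he₂, hmeet, hnsub⟩ := exists_crossing_of_connected hconn hv hw
  refine ⟨e₁, he₁, e₂, he₂, card_pos.mpr (inter_comm e₂ e₁ ▸ hmeet), hunif e₂ he₂ ▸ ?_⟩
  exact card_lt_card (Finset.ssubset_iff_subset_ne.mpr
    ⟨inter_subset_right, fun h => hnsub (inter_eq_right.mp h)⟩)

theorem le_degree_add_one (hunif : ∀ e ∈ E, #e = k) (hcover : ∀ v, ∃ e ∈ E, v ∈ e) (v : V) :
    k ≤ (hyperAdj E).degree v + 1 := by
  obtain ⟨e, he, hv⟩ := hcover v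
  exact hunif e he ▸ card_le_degree_add_one he hv

theorem card_mul_le_sum_degree_add_one (hunif : ∀ e ∈ E, #e = k)
    (hcover : ∀ v, ∃ e ∈ E, v ∈ e) (s : Finset V) :
    #s * k ≤ ∑ v ∈ s, ((hyperAdj E).degree v + 1) := by
  rw [← smul_eq_mul]
  exact card_nsmul_le_sum s _ k fun v _ => le_degree_add_one hunif hcover v

theorem degree_add_one_eq_of_sum_le (hunif : ∀ e ∈ E, #e = k)
    (hcover : ∀ v, ∃ e ∈ E, v ∈ e) {s : Finset V}
    (hs : ∑ v ∈ s, ((hyperAdj E).degree v + 1) ≤ #s * k) :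
    ∀ v ∈ s, (hyperAdj E).degree v + 1 = k := by
  have hsum : ∑ _v ∈ s, k = ∑ v ∈ s, ((hyperAdj E).degree v + 1) := by
    rw [sum_const, smul_eq_mul]
    exact le_antisymm (card_mul_le_sum_degree_add_one hunif hcover s) hs
  exact fun v hv =>
    ((sum_eq_sum_iff_of_le fun v _ => le_degree_add_one hunif hcover v).mp hsum v hv).symm

theorem eq_of_mem_of_isClique (hunif : ∀ e ∈ E, #e = k) {s : Finset V}
    (hs : ∀ v ∈ s, (hyperAdj E).degree v + 1 = k)
    (hclique : (hyperAdj E).IsClique (s : Set V)) {f₀ : Finset V} (hf₀ : f₀ ∈ E)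
    {t₀ : V} (ht₀ : t₀ ∈ s) (ht₀f₀ : t₀ ∈ f₀) (hf : f ∈ E) {t : V} (ht : t ∈ s) (htf : t ∈ f) :
    f = f₀ := by
  have ht₀f : t₀ ∈ f := by
    rcases eq_or_ne t t₀ with rfl | htt₀
    · exact htf
    have hadj := hclique ht ht₀ htt₀
    rw [← mem_neighborFinset, neighborFinset_eq_erase hf htf (by rw [hs t ht, hunif f hf])] at hadj
    exact mem_of_mem_erase hadj
  exact eq_of_degree_add_one_eq hf hf₀ ht₀f ht₀f₀ (by rw [hs t₀ ht₀, hunif f hf])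
    (by rw [hs t₀ ht₀, hunif f₀ hf₀])

theorem card_eq_three_of_interedges_subset_of_isClique (hunif : ∀ e ∈ E, #e = k)
    (he₁ : e₁ ∈ E) (he₂ : e₂ ∈ E) (hne : e₁ ≠ e₂) {t₀ : V} (ht₀ : t₀ ∈ (e₁ ∪ e₂)ᶜ)
    (hcover : ∃ f ∈ E, t₀ ∈ f)
    (hW : (hyperAdj E).interedges (e₁ ∪ e₂) (e₁ ∪ e₂) ⊆ e₁.offDiag ∪ e₂.offDiag)
    (hT : (hyperAdj E).IsClique (((e₁ ∪ e₂)ᶜ : Finset V) : Set V))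
    (hdeg : ∀ t ∈ (e₁ ∪ e₂)ᶜ, (hyperAdj E).degree t + 1 = k) :
    #E = 3 := by
  obtain ⟨f₀, hf₀, ht₀f₀⟩ := hcover
  have hf₀₁ : e₁ ≠ f₀ := fun h => mem_compl.mp ht₀ (mem_union_left _ (h ▸ ht₀f₀))
  have hf₀₂ : e₂ ≠ f₀ := fun h => mem_compl.mp ht₀ (mem_union_right _ (h ▸ ht₀f₀))
  suffices E = {e₁, e₂, f₀} by
    rw [this, card_insert_of_notMem (by simp [hne, hf₀₁]), card_pair hf₀₂]
  refine Subset.antisymm (fun f hf => ?_) (by simp [insert_subset_iff, he₁, he₂, hf₀])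
  by_cases hfW : f ⊆ e₁ ∪ e₂
  · rcases eq_or_eq_of_subset_union hunif he₁ he₂ hf hfW hW with rfl | rfl <;> simp
  · obtain ⟨t, htf, htW⟩ := not_subset.mp hfW
    simp [eq_of_mem_of_isClique hunif hdeg hT hf₀ ht₀ ht₀f₀ hf (mem_compl.mpr htW) htf]

theorem mul_self_le_card_edgeFinset_add_one_of_mem (hunif : ∀ e ∈ E, #e = k)
    (hcover : ∀ v, ∃ e ∈ E, v ∈ e) (he₁ : e₁ ∈ E) (he₂ : e₂ ∈ E) (hm : 0 < #(e₁ ∩ e₂))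
    (hmk : #(e₁ ∩ e₂) < k) (hT : #(e₁ ∪ e₂)ᶜ = #(e₁ ∩ e₂)) :
    k * k ≤ #(hyperAdj E).edgeFinset + 1 ∧ (#(hyperAdj E).edgeFinset + 1 = k * k → #E = 3) := by
  have hcount := (hyperAdj E).two_mul_card_edgeFinset_add_card_interedges (e₁ ∪ e₂)ᶜ
  rw [compl_compl] at hcount
  have hW := union_subset (offDiag_subset_interedges he₁ (subset_union_left (s₂ := e₂)))
    (offDiag_subset_interedges he₂ (subset_union_right (s₁ := e₁)))
  have hTT := interedges_self_subset_offDiag (hyperAdj E) (e₁ ∪ e₂)ᶜ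
  have hunion := card_union_add_card_inter e₁.offDiag e₂.offDiag
  rw [← offDiag_inter, offDiag_card, offDiag_card, offDiag_card, hunif e₁ he₁, hunif e₂ he₂]
    at hunion
  have hWc := card_le_card hW
  have hTTc := card_le_card hTT
  rw [offDiag_card, hT] at hTTc
  have hdeg := card_mul_le_sum_degree_add_one hunif hcover (e₁ ∪ e₂)ᶜ
  have hsum : ∑ v ∈ (e₁ ∪ e₂)ᶜ, ((hyperAdj E).degree v + 1)
      = ∑ v ∈ (e₁ ∪ e₂)ᶜ, (hyperAdj E).degree v + #(e₁ ∩ e₂) := by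
    rw [sum_add_distrib, sum_const, smul_eq_mul, mul_one, hT]
  rw [hT] at hdeg
  have hP := Nat.mul_self_add_le_mul_add_one hm hmk
  have hmm := Nat.le_mul_self #(e₁ ∩ e₂)
  have hkk := Nat.le_mul_self k
  refine ⟨by omega, fun heq => ?_⟩
  obtain ⟨t₀, ht₀⟩ : (e₁ ∪ e₂)ᶜ.Nonempty := card_pos.mp (hT ▸ hm)
  have hWeq := eq_of_subset_of_card_le hW (by omega)
  have hTeq := eq_of_subset_of_card_le hTT (by rw [offDiag_card, hT]; omega)
  have hne : e₁ ≠ e₂ := by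
    rintro rfl
    rw [inter_self, hunif e₁ he₁] at hmk
    exact lt_irrefl _ hmk
  exact card_eq_three_of_interedges_subset_of_isClique hunif he₁ he₂ hne ht₀ (hcover t₀) hWeq.ge
    (isClique_of_offDiag_subset_interedges _ hTeq.ge)
    (degree_add_one_eq_of_sum_le hunif hcover (by rw [hsum, hT]; omega))

theorem mul_self_le_card_edgeFinset_add_one (hV : Fintype.card V = 2 * k)
    (hunif : ∀ e ∈ E, #e = k) (hconn : (hyperAdj E).Connected) :
    k * k ≤ #(hyperAdj E).edgeFinset + 1 ∧ (#(hyperAdj E).edgeFinset + 1 = k * k → #E = 3) := by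
  obtain ⟨v⟩ : Nonempty V := hconn.nonempty
  have hk : 0 < k := by have := Fintype.card_pos_iff.mpr ⟨v⟩; omega
  have : Nontrivial V := Fintype.one_lt_card_iff_nontrivial.mp (by omega)
  obtain ⟨e₁, he₁, e₂, he₂, hm, hmk⟩ := exists_pair_inter_card_pos_lt hconn hunif (by omega)
  have hT : #(e₁ ∪ e₂)ᶜ = #(e₁ ∩ e₂) := by
    have := card_compl_union_add_card_add_card e₁ e₂
    rw [hunif e₁ he₁, hunif e₂ he₂] at this
    omega
  exact mul_self_le_card_edgeFinset_add_one_of_mem hunif (exists_mem_of_connected hconn)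
    he₁ he₂ hm hmk hT

end hyperAdj

theorem nPairs_one_eq_card_edgeFinset {V : Type*} [DecidableEq V] [Fintype V]
    (E : Finset (Finset V)) :
    nPairs E 1 = #(hyperAdj E).edgeFinset := by
  unfold nPairs
  congr 1
  ext p
  rw [mem_filter]
  induction p using Sym2.ind with
  | _ u v =>
    simp only [mem_univ, true_and, SimpleGraph.mem_edgeFinset,
      SimpleGraph.mem_edgeSet, Sym2.mk_isDiag_iff, pairDist, Sym2.lift_mk,
      SimpleGraph.dist_eq_one_iff_adj]
    exact ⟨And.right, fun h => ⟨h.ne, h⟩⟩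

theorem adjacent_pairs_ge_fifteen (E : Finset (Finset (Fin 8)))
    (hunif : ∀ e ∈ E, e.card = 4)
    (hconn : (hyperAdj E).Connected) :
    15 ≤ nPairs E 1 ∧ (nPairs E 1 = 15 → E.card = 3) := by
  rw [nPairs_one_eq_card_edgeFinset]
  obtain ⟨hle, heq⟩ := hyperAdj.mul_self_le_card_edgeFinset_add_one (k := 4) (by simp) hunif hconn
  exact ⟨by omega, fun h => heq (by omega)⟩
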